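/- arXiv:1802.09948 — 5 statements merged into one kernel-verified Lean document; each statement's English description precedes it below -/
import Mathlib

section
/- Let g be a positive integer, G a subgroup of S_g, and N, N' regular subgroups of S_g each normalized by G. Suppose the centralizer of N in S_g is contained in G, and suppose f : N → N' is a group isomorphism that is G-equivariant (f(σ n σ⁻¹) = σ f(n) σ⁻¹ for all σ ∈ G, n ∈ N). Then N' = N. -/
theorem stmt_1 (g : ℕ) (hg : 0 < g) (G N N' : Subgroup (Equiv.Perm (Fin g)))
    (hNtrans : ∀ x y : Fin g, ∃ n ∈ N, n x = y)
    (hNfree : ∀ n ∈ N, ∀ x : Fin g, n x = x → n = 1)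
    (hN'trans : ∀ x y : Fin g, ∃ n ∈ N', n x = y)
    (hN'free : ∀ n ∈ N', ∀ x : Fin g, n x = x → n = 1)
    (hNnorm : ∀ σ ∈ G, ∀ n ∈ N, σ * n * σ⁻¹ ∈ N)
    (hN'norm : ∀ σ ∈ G, ∀ n ∈ N', σ * n * σ⁻¹ ∈ N')
    (hcent : Subgroup.centralizer (N : Set (Equiv.Perm (Fin g))) ≤ G)
    (f : N ≃* N')
    (hequiv : ∀ σ ∈ G, ∀ n m : N, (m : Equiv.Perm (Fin g)) = σ * n * σ⁻¹ →
      ((f m : N') : Equiv.Perm (Fin g)) = σ * (f n : N') * σ⁻¹) :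
    N' = N := by
  set z : Fin g := ⟨0, hg⟩ with hz
  -- uniqueness in N : two elements agreeing at one point are equal
  have uniq : ∀ a ∈ N, ∀ b ∈ N, ∀ x : Fin g, a x = b x → a = b := by
    intro a ha b hb x hx
    have h1 : (b⁻¹ * a) x = x := by
      simp [Equiv.Perm.mul_apply, hx]
    have h2 := hNfree (b⁻¹ * a) (mul_mem (inv_mem hb) ha) x h1
    exact (inv_mul_eq_one.mp h2).symm
  have uniq' : ∀ a ∈ N', ∀ b ∈ N', ∀ x : Fin g, a x = b x → a = b := by
    intro a ha b hb x hx
    have h1 : (b⁻¹ * a) x = x := by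
      simp [Equiv.Perm.mul_apply, hx]
    have h2 := hN'free (b⁻¹ * a) (mul_mem (inv_mem hb) ha) x h1
    exact (inv_mul_eq_one.mp h2).symm
  -- choose the unique element of N sending z to y
  choose n hnN hn using fun y => hNtrans z y
  have hnz : n z = 1 := uniq _ (hnN z) 1 (one_mem N) z (by simp [hn])
  have hmul : ∀ a ∈ N, ∀ y, n (a y) = a * n y := by
    intro a ha y
    refine uniq _ (hnN _) _ (mul_mem ha (hnN y)) z ?_
    simp [hn, Equiv.Perm.mul_apply]
  have hnm : ∀ m : N, n ((m : Equiv.Perm (Fin g)) z) = m := by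
    intro m
    exact uniq _ (hnN _) _ m.2 z (hn _)
  -- the "opposite" regular representation
  have hρkey : ∀ (m : N) (x : Fin g),
      n (n x ((m : Equiv.Perm (Fin g)) z)) = n x * (m : Equiv.Perm (Fin g)) := by
    intro m x
    rw [hmul _ (hnN x), hnm]
  let ρ : N → Equiv.Perm (Fin g) := fun m =>
    { toFun := fun x => n x ((m : Equiv.Perm (Fin g)) z)
      invFun := fun x => n x (((m : Equiv.Perm (Fin g)))⁻¹ z)
      left_inv := by
        intro x
        have := hρkey m x
        show n (n x ((m : Equiv.Perm (Fin g)) z)) ((m : Equiv.Perm (Fin g))⁻¹ z) = x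
        rw [this]
        simp [Equiv.Perm.mul_apply, hn]
      right_inv := by
        intro x
        have h1 : n (n x (((m : Equiv.Perm (Fin g)))⁻¹ z))
            = n x * ((m : Equiv.Perm (Fin g)))⁻¹ := by
          have := hρkey m⁻¹ x
          simpa using this
        show n (n x (((m : Equiv.Perm (Fin g)))⁻¹ z)) ((m : Equiv.Perm (Fin g)) z) = x
        rw [h1]
        simp [Equiv.Perm.mul_apply, hn] }
  have hρ_apply : ∀ (m : N) (x : Fin g), ρ m x = n x ((m : Equiv.Perm (Fin g)) z) :=
    fun m x => rfl
  -- ρ m centralizes N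
  have hρcent : ∀ m : N, ρ m ∈ Subgroup.centralizer (N : Set (Equiv.Perm (Fin g))) := by
    intro m
    rw [Subgroup.mem_centralizer_iff]
    intro a ha
    ext x
    simp only [Equiv.Perm.mul_apply, hρ_apply]
    rw [hmul a ha x]
    simp [Equiv.Perm.mul_apply]
  -- every element of N' commutes with every ρ m
  have hcomm : ∀ m : N, ∀ d ∈ N', ρ m * d = d * ρ m := by
    intro m d hd
    have hσG : ρ m ∈ G := hcent (hρcent m)
    set nn : N := f.symm ⟨d, hd⟩ with hnn
    have hfix : ∀ a : N, (a : Equiv.Perm (Fin g)) = ρ m * a * (ρ m)⁻¹ := by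
      intro a
      have := (Subgroup.mem_centralizer_iff.mp (hρcent m)) a a.2
      rw [← this]
      group
    have := hequiv (ρ m) hσG nn nn (hfix nn)
    have hfd : ((f nn : N') : Equiv.Perm (Fin g)) = d := by
      rw [hnn, MulEquiv.apply_symm_apply]
    rw [hfd] at this
    have : d * ρ m = ρ m * d := by
      calc d * ρ m = (ρ m * d * (ρ m)⁻¹) * ρ m := by rw [← this]
        _ = ρ m * d := by group
    exact this.symm
  -- conclude N' ≤ N
  have hle : N' ≤ N := by
    intro d hd
    have hdx : ∀ x, d x = n (d z) x := by
      intro x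
      have h1 : ρ ⟨n x, hnN x⟩ z = x := by
        rw [hρ_apply]
        simp [hnz, hn]
      have h2 := congrArg (fun p => p z) (hcomm ⟨n x, hnN x⟩ d hd)
      simp only [Equiv.Perm.mul_apply] at h2
      calc d x = d (ρ ⟨n x, hnN x⟩ z) := by rw [h1]
        _ = ρ ⟨n x, hnN x⟩ (d z) := h2.symm
        _ = n (d z) ((n x) z) := hρ_apply _ _
        _ = n (d z) x := by rw [hn]
    have : d = n (d z) := Equiv.ext hdx
    rw [this]
    exact hnN (d z)
  -- cardinalities: both N and N' are in bijection with Fin g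
  have cardN : Nat.card N = g := by
    have e : N ≃ Fin g := Equiv.ofBijective (fun a => (a : Equiv.Perm (Fin g)) z)
      ⟨by
        intro a b hab
        exact Subtype.ext (uniq _ a.2 _ b.2 z hab),
       by
        intro y
        obtain ⟨a, ha, hay⟩ := hNtrans z y
        exact ⟨⟨a, ha⟩, hay⟩⟩
    simp [Nat.card_congr e]
  have cardN' : Nat.card N' = g := by
    have e : N' ≃ Fin g := Equiv.ofBijective (fun a => (a : Equiv.Perm (Fin g)) z)
      ⟨by
        intro a b hab
        exact Subtype.ext (uniq' _ a.2 _ b.2 z hab),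
       by
        intro y
        obtain ⟨a, ha, hay⟩ := hN'trans z y
        exact ⟨⟨a, ha⟩, hay⟩⟩
    simp [Nat.card_congr e]
  -- finish: equal cardinalities and inclusion give equality
  have hsub : (N' : Set (Equiv.Perm (Fin g))) ⊆ (N : Set (Equiv.Perm (Fin g))) := hle
  have hcards : (N : Set (Equiv.Perm (Fin g))).ncard ≤ (N' : Set (Equiv.Perm (Fin g))).ncard := by
    rw [← Nat.card_coe_set_eq, ← Nat.card_coe_set_eq]
    show Nat.card N ≤ Nat.card N'
    rw [cardN, cardN']
  exact SetLike.coe_injective (Set.eq_of_subset_of_ncard_le hsub hcards (Set.toFinite _))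
end

section
/- Let p be an odd prime. Every transitive subgroup of the holomorph Hol(ℤ/p²ℤ) = ℤ/p²ℤ ⋊ (ℤ/p²ℤ)*, acting naturally on ℤ/p²ℤ, contains an element of order p². -/
open Finset

private lemma aux_p_mul {p : ℕ} [Fact p.Prime] (x : ZMod (p ^ 2))
    (hx : ZMod.castHom (dvd_pow_self p two_ne_zero) (ZMod p) x = 0) :
    ∃ c : ZMod (p ^ 2), x = (p : ZMod (p ^ 2)) * c := by
  haveI : NeZero (p ^ 2) := ⟨pow_ne_zero 2 (Fact.out : p.Prime).ne_zero⟩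
  have h1 : ((x.val : ℕ) : ZMod p) = 0 := by
    rwa [ZMod.natCast_val, ← ZMod.castHom_apply (h := dvd_pow_self p two_ne_zero)]
  obtain ⟨m, hm⟩ := (ZMod.natCast_eq_zero_iff _ _).mp h1
  refine ⟨(m : ZMod (p ^ 2)), ?_⟩
  have h2 := ZMod.natCast_rightInverse (n := p ^ 2) x
  rw [← h2, hm]
  push_cast
  ring

private lemma aux_pa_ne {p : ℕ} [Fact p.Prime] (a : ZMod (p ^ 2))
    (ha : ZMod.castHom (dvd_pow_self p two_ne_zero) (ZMod p) a ≠ 0) :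
    (p : ZMod (p ^ 2)) * a ≠ 0 := by
  haveI : NeZero (p ^ 2) := ⟨pow_ne_zero 2 (Fact.out : p.Prime).ne_zero⟩
  intro h
  apply ha
  have hav := ZMod.natCast_rightInverse (n := p ^ 2) a
  rw [← hav] at h
  have h3 : ((p * a.val : ℕ) : ZMod (p ^ 2)) = 0 := by push_cast; rw [← h]
  obtain ⟨m, hm⟩ := (ZMod.natCast_eq_zero_iff _ _).mp h3
  have hp0 : 0 < p := (Fact.out : p.Prime).pos
  have hdvd : p ∣ a.val := by
    refine ⟨m, Nat.eq_of_mul_eq_mul_left hp0 ?_⟩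
    rw [hm]; ring
  rw [ZMod.castHom_apply, ← ZMod.natCast_val]
  exact (ZMod.natCast_eq_zero_iff _ _).mpr hdvd

private lemma aux_gauss {n k : ℕ} (hn : n = 2 * k + 1) :
    ∑ i ∈ range n, i = n * k := by
  have h := Finset.sum_range_id_mul_two n
  have h1 : n - 1 = 2 * k := by omega
  rw [h1] at h
  have h2 : (∑ i ∈ range n, i) * 2 = (n * k) * 2 := by rw [h]; ring
  exact Nat.eq_of_mul_eq_mul_right two_pos h2

/-- An affine map x ↦ a + u x on ZMod p² with u ≡ 1 mod p, a ≢ 0 mod p has order p². -/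
private lemma aux_order {p : ℕ} [Fact p.Prime] (hodd : Odd p)
    (f : Equiv.Perm (ZMod (p ^ 2))) (a : ZMod (p ^ 2)) (u : (ZMod (p ^ 2))ˣ)
    (hf : ∀ x, f x = a + (u : ZMod (p ^ 2)) * x)
    (hu : ZMod.castHom (dvd_pow_self p two_ne_zero) (ZMod p) (u : ZMod (p ^ 2)) = 1)
    (ha : ZMod.castHom (dvd_pow_self p two_ne_zero) (ZMod p) a ≠ 0) :
    orderOf f = p ^ 2 := by
  have hp : p.Prime := Fact.out
  obtain ⟨c, hc⟩ := aux_p_mul ((u : ZMod (p ^ 2)) - 1)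
    (by rw [map_sub, hu, map_one, sub_self])
  have hut : (u : ZMod (p ^ 2)) = 1 + (p : ZMod (p ^ 2)) * c := by
    linear_combination hc
  have hpp : (p : ZMod (p ^ 2)) * (p : ZMod (p ^ 2)) = 0 := by
    have h0 : ((p ^ 2 : ℕ) : ZMod (p ^ 2)) = 0 := ZMod.natCast_self (p ^ 2)
    push_cast at h0
    linear_combination h0
  have hupow : ∀ n : ℕ,
      (u : ZMod (p ^ 2)) ^ n = 1 + (n : ZMod (p ^ 2)) * ((p : ZMod (p ^ 2)) * c) := by
    intro n
    induction n with
    | zero => simp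
    | succ n ih =>
      rw [pow_succ (u : ZMod (p ^ 2)) n, ih, hut]
      push_cast
      linear_combination ((n : ZMod (p ^ 2)) * c * c) * hpp
  have hfpow : ∀ (n : ℕ) (x : ZMod (p ^ 2)),
      (f ^ n) x = (∑ i ∈ range n, (u : ZMod (p ^ 2)) ^ i) * a + (u : ZMod (p ^ 2)) ^ n * x := by
    intro n
    induction n with
    | zero => intro x; simp
    | succ n ih =>
      intro x
      rw [pow_succ f n, Equiv.Perm.mul_apply, hf, ih, Finset.sum_range_succ, pow_succ (u : ZMod (p ^ 2)) n]
      ring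
  have hsum : ∀ n : ℕ, (∑ i ∈ range n, (u : ZMod (p ^ 2)) ^ i)
      = (n : ZMod (p ^ 2)) + ((∑ i ∈ range n, i : ℕ) : ZMod (p ^ 2)) * ((p : ZMod (p ^ 2)) * c) := by
    intro n
    calc (∑ i ∈ range n, (u : ZMod (p ^ 2)) ^ i)
        = ∑ i ∈ range n, (1 + (i : ZMod (p ^ 2)) * ((p : ZMod (p ^ 2)) * c)) :=
          Finset.sum_congr rfl (fun i _ => hupow i)
      _ = (n : ZMod (p ^ 2)) + (∑ i ∈ range n, (i : ZMod (p ^ 2))) * ((p : ZMod (p ^ 2)) * c) := by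
          rw [Finset.sum_add_distrib, ← Finset.sum_mul]; simp
      _ = _ := by push_cast; ring
  obtain ⟨k, hk⟩ := hodd
  have hk' : p = 2 * k + 1 := hk
  have hgp : ∑ i ∈ range p, i = p * k := aux_gauss hk'
  have hk2' : p ^ 2 = 2 * (2 * k * k + 2 * k) + 1 := by rw [hk']; ring
  have hgp2 : ∑ i ∈ range (p ^ 2), i = p ^ 2 * (2 * k * k + 2 * k) := aux_gauss hk2'
  have hfp : ∀ x : ZMod (p ^ 2), (f ^ p) x = (p : ZMod (p ^ 2)) * a + x := by
    intro x
    rw [hfpow, hsum, hgp, hupow]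
    push_cast
    linear_combination ((k : ZMod (p ^ 2)) * c * a + c * x) * hpp
  have hfp2 : f ^ (p ^ 2) = 1 := by
    ext x
    rw [hfpow, hsum, hgp2, hupow]
    simp only [Equiv.Perm.coe_one, id_eq]
    push_cast
    linear_combination (a + (2 * (k : ZMod (p ^ 2)) * (k : ZMod (p ^ 2)) + 2 * (k : ZMod (p ^ 2)))
      * (p : ZMod (p ^ 2)) * c * a + (p : ZMod (p ^ 2)) * c * x) * hpp
  have hfpne : f ^ p ≠ 1 := by
    intro h
    have h0 := hfp 0
    rw [h] at h0
    simp only [Equiv.Perm.coe_one, id_eq, add_zero] at h0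
    exact aux_pa_ne a ha h0.symm
  have hdvd : orderOf f ∣ p ^ 2 := orderOf_dvd_of_pow_eq_one hfp2
  obtain ⟨j, hj2, hjeq⟩ := (Nat.dvd_prime_pow hp).mp hdvd
  interval_cases j
  · exact absurd (orderOf_dvd_iff_pow_eq_one.mp (by rw [hjeq]; simp)) hfpne
  · exact absurd (orderOf_dvd_iff_pow_eq_one.mp (by rw [hjeq]; simp)) hfpne
  · exact hjeq

theorem stmt_4 (p : ℕ) (hp : p.Prime) (hodd : Odd p)
    (H : Subgroup (Equiv.Perm (ZMod (p ^ 2))))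
    (haff : ∀ f ∈ H, ∃ (a : ZMod (p ^ 2)) (u : (ZMod (p ^ 2))ˣ),
      ∀ x, f x = a + (u : ZMod (p ^ 2)) * x)
    (htrans : ∀ x y : ZMod (p ^ 2), ∃ f ∈ H, f x = y) :
    ∃ f ∈ H, orderOf f = p ^ 2 := by
  haveI : Fact p.Prime := ⟨hp⟩
  haveI : NeZero (p ^ 2) := ⟨pow_ne_zero 2 hp.ne_zero⟩
  set π : ZMod (p ^ 2) →+* ZMod p := ZMod.castHom (dvd_pow_self p two_ne_zero) (ZMod p) with hπ
  have hsel : ∀ y : Fin p, ∃ f ∈ H, f 0 = ((y : ℕ) : ZMod (p ^ 2)) := fun y => htrans 0 _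
  choose g hgH hg0 using hsel
  have haffs : ∀ y : Fin p, ∃ (a : ZMod (p ^ 2)) (u : (ZMod (p ^ 2))ˣ),
      ∀ x, (g y) x = a + (u : ZMod (p ^ 2)) * x := fun y => haff (g y) (hgH y)
  choose A U hAU using haffs
  have hA : ∀ y : Fin p, A y = ((y : ℕ) : ZMod (p ^ 2)) := by
    intro y
    have h := hAU y 0
    rw [hg0 y] at h
    simpa using h.symm
  have hcard : Fintype.card (ZMod p)ˣ < Fintype.card (Fin p) := by
    rw [ZMod.card_units, Fintype.card_fin]
    exact Nat.sub_lt hp.pos Nat.one_pos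
  obtain ⟨y, z, hyz, hFeq⟩ :=
    Fintype.exists_ne_map_eq_of_card_lt (fun y : Fin p => Units.map π.toMonoidHom (U y)) hcard
  have hUeq : π (U y : ZMod (p ^ 2)) = π (U z : ZMod (p ^ 2)) := by
    have h := congrArg (Units.val) hFeq
    simpa using h
  have hmem : g y * (g z)⁻¹ ∈ H := mul_mem (hgH y) (inv_mem (hgH z))
  refine ⟨g y * (g z)⁻¹, hmem, ?_⟩
  obtain ⟨a, u, hfeq⟩ := haff (g y * (g z)⁻¹) hmem
  have hcomp : ∀ x : ZMod (p ^ 2),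
      a + (u : ZMod (p ^ 2)) * (A z + (U z : ZMod (p ^ 2)) * x)
        = A y + (U y : ZMod (p ^ 2)) * x := by
    intro x
    have h1 : (g y * (g z)⁻¹) ((g z) x) = (g y) x := by
      simp [Equiv.Perm.mul_apply]
    rw [hfeq, hAU, hAU] at h1
    exact h1
  have he0 : a + (u : ZMod (p ^ 2)) * A z = A y := by
    have h := hcomp 0; simpa using h
  have he1 : (u : ZMod (p ^ 2)) * (U z : ZMod (p ^ 2)) = (U y : ZMod (p ^ 2)) := by
    linear_combination (hcomp 1) - he0
  have hvne : π (U z : ZMod (p ^ 2)) ≠ 0 := by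
    intro h
    exact Units.ne_zero (Units.map π.toMonoidHom (U z)) (by simpa using h)
  have hu1 : π (u : ZMod (p ^ 2)) = 1 := by
    have h1 : π (u : ZMod (p ^ 2)) * π (U z : ZMod (p ^ 2)) = 1 * π (U z : ZMod (p ^ 2)) := by
      rw [← map_mul, he1, hUeq, one_mul]
    exact mul_right_cancel₀ hvne h1
  have ha : π a ≠ 0 := by
    have h0 : π a + π (u : ZMod (p ^ 2)) * π (A z) = π (A y) := by
      rw [← map_mul, ← map_add, he0]
    rw [hu1, one_mul, hA, hA, map_natCast, map_natCast] at h0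
    intro hz
    rw [hz, zero_add] at h0
    apply hyz
    have hv : ((z : ℕ) : ZMod p).val = ((y : ℕ) : ZMod p).val := by rw [h0]
    rw [ZMod.val_cast_of_lt y.isLt, ZMod.val_cast_of_lt z.isLt] at hv
    exact Fin.ext hv.symm
  exact aux_order hodd _ a u hfeq hu1 ha
end

section
/- Let p be an odd prime. The transitive subgroups of Hol(ℤ/p²ℤ) = ℤ/p²ℤ ⋊ ⟨σ⟩ are exactly: the p cyclic subgroups ⟨(1, σ^{j(p−1)})⟩ of order p² (for j = 0,...,p−1), and for each divisor m > 1 of p(p−1) and each j = 0,...,p−1 with the groups coinciding appropriately, the subgroups ⟨(1, σ^{j(p−1)}), (0, σ^{p(p−1)/m})⟩, each isomorphic to C_{p²} ⋊ C_m. -/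
/-- The affine permutation `x ↦ a + u * x` of `ZMod n`. -/
def affinePerm (n : ℕ) (a : ZMod n) (u : (ZMod n)ˣ) : Equiv.Perm (ZMod n) :=
  (Units.mulLeft u).trans (Equiv.addLeft a)

namespace Stmt9

open Subgroup Finset

lemma aff_apply (n : ℕ) (a : ZMod n) (u : (ZMod n)ˣ) (x : ZMod n) :
    affinePerm n a u x = a + u * x := rfl

lemma aff_mul (n : ℕ) (a b : ZMod n) (u v : (ZMod n)ˣ) :
    affinePerm n a u * affinePerm n b v = affinePerm n (a + u * b) (u * v) := by
  ext x
  simp only [Equiv.Perm.mul_apply, aff_apply, Units.val_mul]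
  ring

lemma aff_one (n : ℕ) : affinePerm n 0 1 = 1 := by
  ext x
  simp [aff_apply]

lemma aff_inv (n : ℕ) (a : ZMod n) (u : (ZMod n)ˣ) :
    (affinePerm n a u)⁻¹ = affinePerm n (-(↑u⁻¹ * a)) u⁻¹ := by
  rw [eq_comm, eq_inv_iff_mul_eq_one, aff_mul]
  rw [show u⁻¹ * u = 1 from inv_mul_cancel u]
  rw [show -(↑u⁻¹ * a) + ↑u⁻¹ * a = (0 : ZMod n) by ring, aff_one]

lemma aff_eq_iff (n : ℕ) (a b : ZMod n) (u v : (ZMod n)ˣ) :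
    affinePerm n a u = affinePerm n b v ↔ a = b ∧ u = v := by
  constructor
  · intro h
    have h0 := congrArg (fun f : Equiv.Perm (ZMod n) => f 0) h
    have h1 := congrArg (fun f : Equiv.Perm (ZMod n) => f 1) h
    simp only [aff_apply, mul_zero, add_zero, mul_one] at h0 h1
    refine ⟨h0, Units.ext ?_⟩
    rw [h0] at h1
    exact add_left_cancel h1
  · rintro ⟨rfl, rfl⟩; rfl

lemma aff_pow (n : ℕ) (a : ZMod n) (u : (ZMod n)ˣ) (k : ℕ) :
    (affinePerm n a u) ^ k
      = affinePerm n ((∑ i ∈ Finset.range k, (u : ZMod n) ^ i) * a) (u ^ k) := by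
  induction k with
  | zero => simp [aff_one]
  | succ k ih =>
      rw [pow_succ, ih, aff_mul, Finset.sum_range_succ]
      congr 1
      · rw [Units.val_pow_eq_pow_val]; ring
      · rw [pow_succ]

lemma aff_trans_pow (n : ℕ) (a : ZMod n) (k : ℕ) :
    (affinePerm n a 1) ^ k = affinePerm n ((k : ZMod n) * a) 1 := by
  rw [aff_pow, one_pow]
  congr 1
  simp


section ZModFacts

/-- Reduction mod `p` from `ZMod (p^2)`. -/
def rmod (p : ℕ) : ZMod (p ^ 2) →+* ZMod p :=
  ZMod.castHom (dvd_pow_self p two_ne_zero) (ZMod p)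

variable {p : ℕ} (hp : p.Prime)
include hp

lemma neZero_p : NeZero p := ⟨hp.pos.ne'⟩

lemma neZero_psq : NeZero (p ^ 2) := ⟨pow_ne_zero 2 hp.pos.ne'⟩

lemma rmod_natCast (k : ℕ) : rmod p (k : ZMod (p ^ 2)) = (k : ZMod p) := by
  simp [rmod]

lemma rmod_p : rmod p (p : ZMod (p ^ 2)) = 0 := by
  rw [rmod_natCast hp, ZMod.natCast_self]

lemma rmod_eq_zero_iff (x : ZMod (p ^ 2)) :
    rmod p x = 0 ↔ ∃ z, x = (p : ZMod (p ^ 2)) * z := by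
  haveI := neZero_psq hp
  constructor
  · intro h
    have hx : ((x.val : ℕ) : ZMod (p ^ 2)) = x := by
      rw [ZMod.natCast_val, ZMod.cast_id]
    rw [← hx, rmod_natCast hp, ZMod.natCast_eq_zero_iff] at h
    obtain ⟨t, ht⟩ := h
    exact ⟨(t : ZMod (p ^ 2)), by rw [← hx, ht]; push_cast; ring⟩
  · rintro ⟨z, rfl⟩
    rw [map_mul, rmod_p hp, zero_mul]

lemma not_isUnit_iff (x : ZMod (p ^ 2)) :
    ¬ IsUnit x ↔ ∃ z, x = (p : ZMod (p ^ 2)) * z := by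
  haveI := neZero_p hp
  haveI := neZero_psq hp
  haveI : Fact p.Prime := ⟨hp⟩
  rw [← rmod_eq_zero_iff hp]
  constructor
  · intro h
    by_contra hr
    apply h
    have hx : ((x.val : ℕ) : ZMod (p ^ 2)) = x := by
      rw [ZMod.natCast_val, ZMod.cast_id]
    rw [← hx]
    rw [ZMod.isUnit_iff_coprime]
    rw [Nat.coprime_pow_right_iff two_pos]
    rw [Nat.coprime_comm, hp.coprime_iff_not_dvd]
    intro hdvd
    apply hr
    rw [← hx, rmod_natCast hp, ZMod.natCast_eq_zero_iff]
    exact hdvd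
  · intro h hu
    have := hu.map (rmod p)
    rw [h] at this
    exact (by simpa using this : IsUnit (0 : ZMod p)).ne_zero rfl
    
lemma p_mul_p : (p : ZMod (p ^ 2)) * (p : ZMod (p ^ 2)) = 0 := by
  have : (((p ^ 2 : ℕ)) : ZMod (p ^ 2)) = 0 := ZMod.natCast_self _
  push_cast at this
  linear_combination this

lemma pow_one_add (c : ZMod (p ^ 2)) (k : ℕ) :
    (1 + (p : ZMod (p ^ 2)) * c) ^ k = 1 + (k : ZMod (p ^ 2)) * ((p : ZMod (p ^ 2)) * c) := by
  induction k with
  | zero => simp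
  | succ k ih =>
      have hs : (1 + (p : ZMod (p ^ 2)) * c) ^ (k + 1)
          = (1 + (p : ZMod (p ^ 2)) * c) ^ k * (1 + (p : ZMod (p ^ 2)) * c) := pow_succ _ _
      rw [hs, ih]
      push_cast
      linear_combination ((k:ZMod (p^2)) * c * c) * p_mul_p hp

lemma unit_one_add_pow_p (c : ZMod (p ^ 2)) :
    (1 + (p : ZMod (p ^ 2)) * c) ^ p = 1 := by
  rw [pow_one_add hp]
  linear_combination c * p_mul_p hp

/-- a unit whose `p`-th power is `1` is `≡ 1 mod p`. -/
lemma unit_mod_p (u : (ZMod (p ^ 2))ˣ) (h : u ^ p = 1) :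
    ∃ c, (u : ZMod (p ^ 2)) = 1 + (p : ZMod (p ^ 2)) * c := by
  haveI := neZero_p hp
  haveI : Fact p.Prime := ⟨hp⟩
  set ub : (ZMod p)ˣ := Units.map (rmod p).toMonoidHom u with hub
  have h1 : ub ^ p = 1 := by rw [hub, ← map_pow, h, map_one]
  have h2 : ub ^ (p - 1) = 1 := by
    have := pow_card_eq_one (G := (ZMod p)ˣ) (x := ub)
    rwa [ZMod.card_units_eq_totient, Nat.totient_prime hp] at this
  have hord : orderOf ub ∣ Nat.gcd p (p - 1) := Nat.dvd_gcd (orderOf_dvd_of_pow_eq_one h1)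
    (orderOf_dvd_of_pow_eq_one h2)
  have hg : Nat.gcd p (p - 1) = 1 := by
    have d := Nat.dvd_sub (Nat.gcd_dvd_left p (p - 1)) (Nat.gcd_dvd_right p (p - 1))
    rw [Nat.sub_sub_self hp.pos] at d
    exact Nat.dvd_one.mp d
  have : ub = 1 := orderOf_eq_one_iff.mp (Nat.dvd_one.mp (hg ▸ hord))
  have hr : rmod p ((u : ZMod (p ^ 2)) - 1) = 0 := by
    have : rmod p (u : ZMod (p ^ 2)) = 1 := by
      have := congrArg (Units.val) this
      simpa [hub] using this
    rw [map_sub, this, map_one, sub_self]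
  obtain ⟨z, hz⟩ := (rmod_eq_zero_iff hp _).mp hr
  exact ⟨z, by linear_combination hz⟩

lemma card_units_psq : Nat.card (ZMod (p ^ 2))ˣ = p * (p - 1) := by
  haveI := neZero_psq hp
  rw [Nat.card_eq_fintype_card, ZMod.card_units_eq_totient,
    Nat.totient_prime_pow hp (by norm_num : 0 < 2)]
  rw [pow_one]

end ZModFacts


section Orbit

variable {p : ℕ} (hp : p.Prime) (hodd : Odd p)
include hp hodd

lemma sum_pow_p (c : ZMod (p ^ 2)) :
    (∑ i ∈ Finset.range p, (1 + (p : ZMod (p ^ 2)) * c) ^ i) = (p : ZMod (p ^ 2)) := by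
  obtain ⟨t, ht⟩ := hodd
  have hsum : (∑ i ∈ Finset.range p, i) = p * t := by
    have h2 : (∑ i ∈ Finset.range p, i) * 2 = p * (p - 1) := Finset.sum_range_id_mul_two p
    have : p - 1 = 2 * t := by omega
    rw [this] at h2
    have : p * (2 * t) = (p * t) * 2 := by ring
    rw [this] at h2
    exact Nat.eq_of_mul_eq_mul_right two_pos h2
  calc (∑ i ∈ Finset.range p, (1 + (p : ZMod (p ^ 2)) * c) ^ i)
      = ∑ i ∈ Finset.range p, (1 + (i : ZMod (p ^ 2)) * ((p : ZMod (p ^ 2)) * c)) := by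
        exact Finset.sum_congr rfl fun i _ => pow_one_add hp c i
    _ = (p : ZMod (p ^ 2)) + (((∑ i ∈ Finset.range p, i : ℕ)) : ZMod (p ^ 2)) * ((p : ZMod (p ^ 2)) * c) := by
        rw [Finset.sum_add_distrib, ← Finset.sum_mul]
        simp [Nat.cast_sum]
    _ = (p : ZMod (p ^ 2)) := by
        rw [hsum]
        push_cast
        linear_combination ((t : ZMod (p ^ 2)) * c) * p_mul_p hp

lemma aff_pow_p {u : (ZMod (p ^ 2))ˣ} {c : ZMod (p ^ 2)}
    (hu : (u : ZMod (p ^ 2)) = 1 + (p : ZMod (p ^ 2)) * c) :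
    (affinePerm (p ^ 2) 1 u) ^ p = affinePerm (p ^ 2) (p : ZMod (p ^ 2)) 1 := by
  rw [aff_pow]
  have h1 : (∑ i ∈ Finset.range p, (u : ZMod (p ^ 2)) ^ i) * 1 = (p : ZMod (p ^ 2)) := by
    rw [mul_one, hu, sum_pow_p hp hodd]
  have h2 : u ^ p = 1 := Units.ext (by
    rw [Units.val_pow_eq_pow_val, hu, unit_one_add_pow_p hp, Units.val_one])
  rw [h1, h2]

lemma orbit_surj {u : (ZMod (p ^ 2))ˣ} {c : ZMod (p ^ 2)}
    (hu : (u : ZMod (p ^ 2)) = 1 + (p : ZMod (p ^ 2)) * c) (y : ZMod (p ^ 2)) :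
    ∃ k : ℕ, ((affinePerm (p ^ 2) 1 u) ^ k) 0 = y := by
  haveI := neZero_p hp
  haveI := neZero_psq hp
  set f := affinePerm (p ^ 2) 1 u with hf
  have happ : ∀ k : ℕ, (f ^ k) 0 = ∑ i ∈ Finset.range k, (u : ZMod (p ^ 2)) ^ i := by
    intro k
    rw [hf, aff_pow, aff_apply, mul_zero, add_zero, mul_one]
  set k0 : ℕ := (rmod p y).val with hk0
  have hru : rmod p (u : ZMod (p ^ 2)) = 1 := by
    rw [hu, map_add, map_one, map_mul, rmod_p hp, zero_mul, add_zero]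
  have hSk : rmod p ((f ^ k0) 0) = rmod p y := by
    rw [happ, map_sum]
    calc (∑ i ∈ Finset.range k0, rmod p ((u : ZMod (p ^ 2)) ^ i))
        = ∑ i ∈ Finset.range k0, 1 := by
          exact Finset.sum_congr rfl fun i _ => by rw [map_pow, hru, one_pow]
      _ = (k0 : ZMod p) := by simp
      _ = rmod p y := by rw [hk0, ZMod.natCast_val, ZMod.cast_id]
  obtain ⟨z, hz⟩ := (rmod_eq_zero_iff hp (y - (f ^ k0) 0)).mp
    (by rw [map_sub, hSk, sub_self])
  refine ⟨k0 + p * z.val, ?_⟩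
  have hsplit : f ^ (k0 + p * z.val) = f ^ k0 * (f ^ p) ^ z.val := by
    rw [← pow_mul, ← pow_add]
  have hzv : ((z.val : ℕ) : ZMod (p ^ 2)) = z := by rw [ZMod.natCast_val, ZMod.cast_id]
  have hupow : ((u : ZMod (p ^ 2)) ^ k0) = 1 + (k0 : ZMod (p ^ 2)) * ((p : ZMod (p ^ 2)) * c) := by
    rw [hu, pow_one_add hp]
  rw [hsplit, aff_pow_p hp hodd hu, aff_trans_pow, Equiv.Perm.mul_apply]
  have happly : affinePerm (p ^ 2) ((z.val : ZMod (p ^ 2)) * (p : ZMod (p ^ 2))) 1 0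
      = (p : ZMod (p ^ 2)) * z := by
    rw [aff_apply, Units.val_one, mul_zero, add_zero, hzv]
    ring
  rw [happly, hf, aff_pow, aff_apply]
  have h0 : (f ^ k0) 0 = (∑ i ∈ Finset.range k0, (u : ZMod (p ^ 2)) ^ i) := happ k0
  have : (∑ i ∈ Finset.range k0, (u : ZMod (p ^ 2)) ^ i) * 1
      + ((u ^ k0 : (ZMod (p^2))ˣ) : ZMod (p ^ 2)) * ((p : ZMod (p ^ 2)) * z)
      = (f ^ k0) 0 + (p : ZMod (p ^ 2)) * z := by
    rw [h0, mul_one, Units.val_pow_eq_pow_val, hupow]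
    linear_combination ((k0 : ZMod (p^2)) * c * z) * p_mul_p hp
  rw [this]
  linear_combination - hz

end Orbit


section Helpers

lemma comm_units {G : Type*} [CommGroup G] (a b : G) : a * b * a⁻¹ * b⁻¹ = 1 := by
  rw [mul_assoc, mul_mul_mul_comm]
  simp

lemma zpowers_pow_gcd {G : Type*} [Group G] (σ : G) (N k : ℕ) (h1 : σ ^ N = 1) :
    Subgroup.zpowers (σ ^ k) = Subgroup.zpowers (σ ^ (Nat.gcd N k)) := by
  apply le_antisymm
  · rw [Subgroup.zpowers_le]
    obtain ⟨s, hs⟩ := Nat.gcd_dvd_right N k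
    have hh : σ ^ k = (σ ^ Nat.gcd N k) ^ s := by rw [← pow_mul, ← hs]
    rw [hh]
    exact Subgroup.pow_mem _ (Subgroup.mem_zpowers (σ ^ Nat.gcd N k)) s
  · rw [Subgroup.zpowers_le]
    refine Subgroup.mem_zpowers_iff.mpr ⟨Nat.gcdB N k, ?_⟩
    have h4 : ((σ ^ k : G)) ^ (Nat.gcdB N k) = σ ^ ((k : ℤ) * Nat.gcdB N k) := by
      rw [← zpow_natCast, ← zpow_mul]
    have h3 : σ ^ ((N : ℤ) * Nat.gcdA N k) = 1 := by
      rw [zpow_mul, zpow_natCast, h1, one_zpow]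
    rw [h4]
    calc σ ^ ((k : ℤ) * Nat.gcdB N k)
        = σ ^ ((N : ℤ) * Nat.gcdA N k) * σ ^ ((k : ℤ) * Nat.gcdB N k) := by rw [h3, one_mul]
      _ = σ ^ ((N : ℤ) * Nat.gcdA N k + (k : ℤ) * Nat.gcdB N k) := (zpow_add σ _ _).symm
      _ = σ ^ ((Nat.gcd N k : ℤ)) := by rw [← Nat.gcd_eq_gcd_ab]
      _ = σ ^ (Nat.gcd N k) := zpow_natCast σ _

/-- the hom `u ↦ (x ↦ u x)`. -/
def affHom (n : ℕ) : (ZMod n)ˣ →* Equiv.Perm (ZMod n) where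
  toFun u := affinePerm n 0 u
  map_one' := aff_one n
  map_mul' u v := by rw [aff_mul, aff_eq_iff]; exact ⟨by ring, rfl⟩

lemma aff_unit_zpow (n : ℕ) (u : (ZMod n)ˣ) (z : ℤ) :
    (affinePerm n 0 u) ^ z = affinePerm n 0 (u ^ z) :=
  ((affHom n).map_zpow u z).symm

variable {p : ℕ} (hp : p.Prime)

include hp in
lemma trans_of_gen (hodd : Odd p) {H : Subgroup (Equiv.Perm (ZMod (p ^ 2)))}
    {u : (ZMod (p ^ 2))ˣ} {c : ZMod (p ^ 2)}
    (hu : (u : ZMod (p ^ 2)) = 1 + (p : ZMod (p ^ 2)) * c)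
    (hmem : affinePerm (p ^ 2) 1 u ∈ H) :
    ∀ x y : ZMod (p ^ 2), ∃ f ∈ H, f x = y := by
  intro x y
  obtain ⟨kx, hkx⟩ := orbit_surj hp hodd hu x
  obtain ⟨ky, hky⟩ := orbit_surj hp hodd hu y
  refine ⟨(affinePerm (p ^ 2) 1 u) ^ ky * ((affinePerm (p ^ 2) 1 u) ^ kx)⁻¹,
    H.mul_mem (H.pow_mem hmem ky) (H.inv_mem (H.pow_mem hmem kx)), ?_⟩
  rw [Equiv.Perm.mul_apply]
  have h0 : ((affinePerm (p ^ 2) 1 u) ^ kx)⁻¹ x = 0 := by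
    rw [← hkx]; exact Equiv.symm_apply_apply _ _
  rw [h0, hky]

lemma prod_mem_form {H : Subgroup (Equiv.Perm (ZMod (p ^ 2)))}
    {a b : ZMod (p ^ 2)} {u v : (ZMod (p ^ 2))ˣ}
    (haH : affinePerm (p ^ 2) a u ∈ H) (hbH : affinePerm (p ^ 2) b v ∈ H) :
    affinePerm (p ^ 2) (a - (u : ZMod (p ^ 2)) * (↑v⁻¹ : ZMod (p ^ 2)) * b) (u * v⁻¹) ∈ H := by
  have hm := H.mul_mem haH (H.inv_mem hbH)
  rwa [aff_inv, aff_mul,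
    show a + (u : ZMod (p ^ 2)) * (-((↑v⁻¹ : ZMod (p ^ 2)) * b))
      = a - (u : ZMod (p ^ 2)) * (↑v⁻¹ : ZMod (p ^ 2)) * b by ring] at hm

include hp in
lemma rmod_unit_prod {u v : (ZMod (p ^ 2))ˣ}
    (hr : rmod p (u : ZMod (p ^ 2)) = rmod p (v : ZMod (p ^ 2))) :
    rmod p ((u : ZMod (p ^ 2)) * (↑v⁻¹ : ZMod (p ^ 2))) = 1
    ∧ ∃ z, (u : ZMod (p ^ 2)) * (↑v⁻¹ : ZMod (p ^ 2)) = 1 + (p : ZMod (p ^ 2)) * z := by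
  haveI := neZero_p hp
  haveI : Fact p.Prime := ⟨hp⟩
  have hvu : IsUnit (rmod p (v : ZMod (p ^ 2))) := (Units.isUnit v).map (rmod p)
  have hkey : (rmod p ((u : ZMod (p ^ 2)) * (↑v⁻¹ : ZMod (p ^ 2))) - 1) * rmod p (v : ZMod (p ^ 2)) = 0 := by
    have : (u : ZMod (p ^ 2)) * (↑v⁻¹ : ZMod (p ^ 2)) * (v : ZMod (p ^ 2)) = (u : ZMod (p ^ 2)) := by
      rw [mul_assoc, Units.inv_mul, mul_one]
    have e1 : rmod p ((u : ZMod (p ^ 2)) * (↑v⁻¹ : ZMod (p ^ 2)) * (v : ZMod (p ^ 2)))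
        = rmod p ((u : ZMod (p ^ 2)) * (↑v⁻¹ : ZMod (p ^ 2))) * rmod p (v : ZMod (p ^ 2)) :=
      map_mul _ _ _
    calc (rmod p ((u : ZMod (p ^ 2)) * (↑v⁻¹ : ZMod (p ^ 2))) - 1) * rmod p (v : ZMod (p ^ 2))
        = rmod p ((u : ZMod (p ^ 2)) * (↑v⁻¹ : ZMod (p ^ 2))) * rmod p (v : ZMod (p ^ 2))
          - rmod p (v : ZMod (p ^ 2)) := by ring
      _ = rmod p ((u : ZMod (p ^ 2)) * (↑v⁻¹ : ZMod (p ^ 2)) * (v : ZMod (p ^ 2)))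
          - rmod p (v : ZMod (p ^ 2)) := by rw [e1]
      _ = rmod p (u : ZMod (p ^ 2)) - rmod p (v : ZMod (p ^ 2)) := by rw [this]
      _ = 0 := by rw [hr, sub_self]
  have h1 : rmod p ((u : ZMod (p ^ 2)) * (↑v⁻¹ : ZMod (p ^ 2))) = 1 := by
    rcases mul_eq_zero.mp hkey with h | h
    · exact sub_eq_zero.mp h
    · exact absurd h hvu.ne_zero
  refine ⟨h1, ?_⟩
  have h2 : rmod p ((u : ZMod (p ^ 2)) * (↑v⁻¹ : ZMod (p ^ 2)) - 1) = 0 := by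
    rw [map_sub, h1, map_one, sub_self]
  obtain ⟨z, hz⟩ := (rmod_eq_zero_iff hp _).mp h2
  exact ⟨z, by linear_combination hz⟩

end Helpers


section CaseB

variable {p : ℕ} (hp : p.Prime) {H : Subgroup (Equiv.Perm (ZMod (p ^ 2)))}

include hp in
/-- If every element of a "transitive" subgroup of affine maps has translation part
determined mod `p` by its unit part mod `p`, we get a contradiction. -/
lemma no_trans (htrans : ∀ y, ∃ f ∈ H, f 0 = y)
    (haff' : ∀ f ∈ H, ∃ a u, f = affinePerm (p ^ 2) a u)
    (WD : ∀ a b u v, affinePerm (p ^ 2) a u ∈ H → affinePerm (p ^ 2) b v ∈ H →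
      rmod p (u : ZMod (p ^ 2)) = rmod p (v : ZMod (p ^ 2)) → rmod p a = rmod p b) :
    False := by
  haveI := neZero_p hp
  haveI : Fact p.Prime := ⟨hp⟩
  have key : ∀ y : ZMod p, ∃ u : (ZMod (p ^ 2))ˣ,
      affinePerm (p ^ 2) ((y.val : ZMod (p ^ 2))) u ∈ H := by
    intro y
    obtain ⟨f, hfH, hf0⟩ := htrans ((y.val : ZMod (p ^ 2)))
    obtain ⟨a, u, rfl⟩ := haff' f hfH
    have ha : a = (y.val : ZMod (p ^ 2)) := by
      rwa [aff_apply, mul_zero, add_zero] at hf0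
    exact ⟨u, ha ▸ hfH⟩
  choose U hU using key
  have hinj : Function.Injective (fun y => Units.map (rmod p).toMonoidHom (U y)) := by
    intro y1 y2 h
    have hcoe : rmod p ((U y1 : ZMod (p ^ 2))) = rmod p ((U y2 : ZMod (p ^ 2))) := by
      have := congrArg Units.val h
      simpa using this
    have hW := WD _ _ _ _ (hU y1) (hU y2) hcoe
    rwa [rmod_natCast hp, rmod_natCast hp, ZMod.natCast_val, ZMod.cast_id,
      ZMod.natCast_val, ZMod.cast_id] at hW
  have hle := Fintype.card_le_of_injective _ hinj
  rw [ZMod.card, ZMod.card_units_eq_totient, Nat.totient_prime hp] at hle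
  have := hp.two_le
  omega

include hp in
lemma comm_mem {v0 : (ZMod (p ^ 2))ˣ} (hgH : affinePerm (p ^ 2) 1 v0 ∈ H)
    {C : ZMod (p ^ 2)} {W : (ZMod (p ^ 2))ˣ} (hCW : affinePerm (p ^ 2) C W ∈ H) :
    affinePerm (p ^ 2) (C + (W : ZMod (p ^ 2)) - (v0 : ZMod (p ^ 2)) * C - 1) 1 ∈ H := by
  have hm := H.mul_mem (H.mul_mem (H.mul_mem hCW hgH) (H.inv_mem hCW)) (H.inv_mem hgH)
  have e1 : (W : ZMod (p ^ 2)) * (↑W⁻¹ : ZMod (p ^ 2)) = 1 := Units.mul_inv W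
  have e2 : (v0 : ZMod (p ^ 2)) * (↑v0⁻¹ : ZMod (p ^ 2)) = 1 := Units.mul_inv v0
  have heq : affinePerm (p ^ 2) C W * affinePerm (p ^ 2) 1 v0 * (affinePerm (p ^ 2) C W)⁻¹
        * (affinePerm (p ^ 2) 1 v0)⁻¹
      = affinePerm (p ^ 2) (C + (W : ZMod (p ^ 2)) - (v0 : ZMod (p ^ 2)) * C - 1) 1 := by
    rw [aff_inv, aff_inv, aff_mul, aff_mul, aff_mul, aff_eq_iff]
    refine ⟨?_, comm_units W v0⟩
    simp only [Units.val_mul]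
    linear_combination (-((v0 : ZMod (p ^ 2)) * C) - (v0 : ZMod (p ^ 2)) * (↑v0⁻¹ : ZMod (p ^ 2))) * e1 - e2
  rwa [heq] at hm

include hp in
lemma wd_of_stab
    (hnu : ∀ a, affinePerm (p ^ 2) a 1 ∈ H → rmod p a = 0)
    {w : (ZMod (p ^ 2))ˣ} {d : ZMod (p ^ 2)}
    (hwH : affinePerm (p ^ 2) 0 w ∈ H)
    (hw : (w : ZMod (p ^ 2)) = 1 + (p : ZMod (p ^ 2)) * d) (hd : IsUnit d) :
    ∀ a b u v, affinePerm (p ^ 2) a u ∈ H → affinePerm (p ^ 2) b v ∈ H →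
      rmod p (u : ZMod (p ^ 2)) = rmod p (v : ZMod (p ^ 2)) → rmod p a = rmod p b := by
  haveI := neZero_p hp
  haveI := neZero_psq hp
  haveI : Fact p.Prime := ⟨hp⟩
  intro a b u v haH hbH hr
  obtain ⟨h1, z, hz⟩ := rmod_unit_prod hp hr
  set D := hd.unit with hD
  set k := ((-z) * ((↑D⁻¹ : ZMod (p ^ 2)))).val with hk
  have hkc : ((k : ℕ) : ZMod (p ^ 2)) = -z * (↑D⁻¹ : ZMod (p ^ 2)) := by
    rw [hk, ZMod.natCast_val, ZMod.cast_id]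
  have hDd : (↑D⁻¹ : ZMod (p ^ 2)) * d = 1 := by
    have hsp : (↑D : ZMod (p ^ 2)) = d := hd.unit_spec
    rw [← hsp, Units.inv_mul]
  have hwk : ((w ^ k : (ZMod (p ^ 2))ˣ) : ZMod (p ^ 2)) = 1 - (p : ZMod (p ^ 2)) * z := by
    rw [Units.val_pow_eq_pow_val, hw, pow_one_add hp, hkc]
    linear_combination (-((p : ZMod (p ^ 2)) * z)) * hDd
  have hprod := prod_mem_form haH hbH
  have hwkH : affinePerm (p ^ 2) 0 (w ^ k) ∈ H := by
    have hpm := H.pow_mem hwH k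
    rwa [aff_pow, mul_zero] at hpm
  have hX := H.mul_mem hwkH hprod
  rw [aff_mul] at hX
  have huv : ((u * v⁻¹ : (ZMod (p ^ 2))ˣ) : ZMod (p ^ 2)) = 1 + (p : ZMod (p ^ 2)) * z := by
    rw [Units.val_mul]; exact hz
  have hun : (w ^ k) * (u * v⁻¹) = 1 := by
    apply Units.ext
    rw [Units.val_mul, hwk, huv, Units.val_one]
    linear_combination (-(z * z)) * p_mul_p hp
  rw [hun] at hX
  have h0 := hnu _ hX
  have hrwk : rmod p ((w ^ k : (ZMod (p ^ 2))ˣ) : ZMod (p ^ 2)) = 1 := by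
    rw [hwk, map_sub, map_mul, rmod_p hp, zero_mul, sub_zero, map_one]
  rw [map_add, map_zero, zero_add, map_mul, hrwk, one_mul, map_sub, map_mul, map_mul] at h0
  have h1' : rmod p (u : ZMod (p ^ 2)) * rmod p (↑v⁻¹ : ZMod (p ^ 2)) = 1 := by
    rw [← map_mul]; exact h1
  have hfin : rmod p a - rmod p b = 0 := by linear_combination h0 + (rmod p b) * h1'
  exact sub_eq_zero.mp hfin

include hp in
lemma wd_of_comm
    (hnu : ∀ a, affinePerm (p ^ 2) a 1 ∈ H → rmod p a = 0)
    {v0 : (ZMod (p ^ 2))ˣ} (hgH : affinePerm (p ^ 2) 1 v0 ∈ H)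
    (hv : rmod p (v0 : ZMod (p ^ 2)) ≠ 1) :
    ∀ a b u v, affinePerm (p ^ 2) a u ∈ H → affinePerm (p ^ 2) b v ∈ H →
      rmod p (u : ZMod (p ^ 2)) = rmod p (v : ZMod (p ^ 2)) → rmod p a = rmod p b := by
  haveI := neZero_p hp
  haveI := neZero_psq hp
  haveI : Fact p.Prime := ⟨hp⟩
  intro a b u v haH hbH hr
  obtain ⟨h1, z, hz⟩ := rmod_unit_prod hp hr
  have hC := prod_mem_form haH hbH
  have hcm := comm_mem hp hgH hC
  have h0 := hnu _ hcm
  have huvr : rmod p ((u * v⁻¹ : (ZMod (p ^ 2))ˣ) : ZMod (p ^ 2)) = 1 := by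
    rw [Units.val_mul]
    exact h1
  rw [map_sub, map_sub, map_add, huvr, map_one, map_mul] at h0
  -- h0 : rmod C + 1 - rmod v0 * rmod C - 1 = 0
  set e := rmod p (a - (u : ZMod (p ^ 2)) * (↑v⁻¹ : ZMod (p ^ 2)) * b) with he
  have hfac : e * (1 - rmod p (v0 : ZMod (p ^ 2))) = 0 := by linear_combination h0
  have he0 : e = 0 := by
    rcases mul_eq_zero.mp hfac with h | h
    · exact h
    · exact absurd (by linear_combination -h) hv
  have hCr : e = rmod p a - rmod p b := by
    have h1' : rmod p (u : ZMod (p ^ 2)) * rmod p (↑v⁻¹ : ZMod (p ^ 2)) = 1 := by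
      rw [← map_mul]; exact h1
    rw [he, map_sub, map_mul, map_mul]
    linear_combination (-(rmod p b)) * h1'
  exact sub_eq_zero.mp (hCr.symm.trans he0)


include hp in
lemma caseB (hodd : Odd p) {σ : (ZMod (p ^ 2))ˣ} (hσ : orderOf σ = p * (p - 1))
    (haff' : ∀ f ∈ H, ∃ a u, f = affinePerm (p ^ 2) a u)
    (htrans : ∀ x y : ZMod (p ^ 2), ∃ f ∈ H, f x = y)
    (hnu : ∀ a, affinePerm (p ^ 2) a 1 ∈ H → rmod p a = 0) :
    ∃ j < p, H = Subgroup.zpowers (affinePerm (p ^ 2) 1 (σ ^ (j * (p - 1)))) := by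
  haveI := neZero_p hp
  haveI := neZero_psq hp
  haveI : Fact p.Prime := ⟨hp⟩
  have htrans0 : ∀ y, ∃ f ∈ H, f 0 = y := fun y => htrans 0 y
  obtain ⟨f, hfH, hf0⟩ := htrans0 1
  obtain ⟨a, v, rfl⟩ := haff' f hfH
  have ha : a = 1 := by rwa [aff_apply, mul_zero, add_zero] at hf0
  subst ha
  have hgH : affinePerm (p ^ 2) 1 v ∈ H := hfH
  have hrv : rmod p (v : ZMod (p ^ 2)) = 1 := by
    by_contra hv
    exact no_trans hp htrans0 haff' (wd_of_comm hp hnu hgH hv)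
  obtain ⟨c, hc⟩ : ∃ c, (v : ZMod (p ^ 2)) = 1 + (p : ZMod (p ^ 2)) * c := by
    have hr0 : rmod p ((v : ZMod (p ^ 2)) - 1) = 0 := by
      rw [map_sub, hrv, map_one, sub_self]
    obtain ⟨z, hz⟩ := (rmod_eq_zero_iff hp _).mp hr0
    exact ⟨z, by linear_combination hz⟩
  have hstab : ∀ w : (ZMod (p ^ 2))ˣ, affinePerm (p ^ 2) 0 w ∈ H → w = 1 := by
    intro w hwH
    by_contra hw1
    have hcm := comm_mem hp hgH hwH
    have h0 := hnu _ hcm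
    have hr0 : rmod p ((w : ZMod (p ^ 2)) - 1) = 0 := by
      rw [← h0]; congr 1; ring
    obtain ⟨d, hd⟩ := (rmod_eq_zero_iff hp _).mp hr0
    have hwd : (w : ZMod (p ^ 2)) = 1 + (p : ZMod (p ^ 2)) * d := by linear_combination hd
    have hdu : IsUnit d := by
      by_contra hdn
      obtain ⟨e, he⟩ := (not_isUnit_iff hp d).mp hdn
      apply hw1
      apply Units.ext
      rw [hwd, he, Units.val_one]
      linear_combination e * p_mul_p hp
    exact no_trans hp htrans0 haff' (wd_of_stab hp hnu hwH hwd hdu)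
  have hHg : H = Subgroup.zpowers (affinePerm (p ^ 2) 1 v) := by
    apply le_antisymm
    · intro h hh
      obtain ⟨b, ub, rfl⟩ := haff' h hh
      obtain ⟨k, hk⟩ := orbit_surj hp hodd hc b
      set gk := (affinePerm (p ^ 2) 1 v) ^ k with hgk
      have hmem2 : gk⁻¹ * affinePerm (p ^ 2) b ub ∈ H :=
        H.mul_mem (H.inv_mem (H.pow_mem hgH k)) hh
      obtain ⟨a', u', hrep⟩ := haff' _ hmem2
      have ha' : a' = 0 := by
        have happ := congrArg (fun F : Equiv.Perm (ZMod (p ^ 2)) => F 0) hrep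
        simp only [Equiv.Perm.mul_apply] at happ
        rw [aff_apply, mul_zero, add_zero, aff_apply, mul_zero, add_zero] at happ
        rw [← happ, ← hk]
        exact Equiv.symm_apply_apply _ _
      subst ha'
      have hu1 : u' = 1 := hstab u' (hrep ▸ hmem2)
      have hone : gk⁻¹ * affinePerm (p ^ 2) b ub = 1 := by
        rw [hrep, hu1, aff_one]
      have : affinePerm (p ^ 2) b ub = gk := by
        have := inv_mul_eq_one.mp hone
        exact this.symm
      rw [this, hgk]
      exact Subgroup.mem_zpowers_iff.mpr ⟨(k : ℤ), by rw [zpow_natCast]⟩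
    · rw [Subgroup.zpowers_le]; exact hgH
  have hvp : v ^ p = 1 := Units.ext (by
    rw [Units.val_pow_eq_pow_val, hc, unit_one_add_pow_p hp, Units.val_one])
  have htop : Subgroup.zpowers σ = ⊤ := by
    apply Subgroup.eq_top_of_card_eq
    rw [Nat.card_zpowers, hσ, card_units_psq hp]
  obtain ⟨t, ht0⟩ : v ∈ Submonoid.powers σ := by
    have hmem : v ∈ Subgroup.zpowers σ := htop ▸ Subgroup.mem_top v
    exact ((isOfFinOrder_of_finite σ).mem_powers_iff_mem_zpowers).mpr hmem
  have ht : σ ^ t = v := ht0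
  have hdvd : p * (p - 1) ∣ t * p := by
    rw [← hσ]
    apply orderOf_dvd_of_pow_eq_one
    rw [pow_mul, ht, hvp]
  have hdvd2 : (p - 1) ∣ t := by
    obtain ⟨s, hs⟩ := hdvd
    refine ⟨s, ?_⟩
    have h2 : p * t = p * ((p - 1) * s) := by
      rw [mul_comm p t, hs]; ring
    exact Nat.eq_of_mul_eq_mul_left hp.pos h2
  obtain ⟨s, hs⟩ := hdvd2
  have hords : orderOf (σ ^ (p - 1)) = p := by
    rw [orderOf_pow, hσ]
    have hg : Nat.gcd (p * (p - 1)) (p - 1) = p - 1 := by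
      rw [Nat.gcd_comm]
      exact Nat.gcd_eq_left (dvd_mul_left (p - 1) p)
    rw [hg]
    exact Nat.mul_div_cancel p (by have := hp.two_le; omega)
  refine ⟨s % p, Nat.mod_lt s hp.pos, ?_⟩
  have hv2 : v = σ ^ ((s % p) * (p - 1)) := by
    have e1 : v = (σ ^ (p - 1)) ^ s := by rw [← pow_mul, ← hs, ht]
    have e2 : (σ ^ (p - 1)) ^ s = (σ ^ (p - 1)) ^ (s % p) := by
      conv_lhs => rw [← pow_mod_orderOf]
      rw [hords]
    rw [e1, e2, ← pow_mul, mul_comm]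
  rw [hHg, hv2]

end CaseB


section CaseA

variable {p : ℕ} (hp : p.Prime) {H : Subgroup (Equiv.Perm (ZMod (p ^ 2)))}

include hp in
lemma caseA {σ : (ZMod (p ^ 2))ˣ} (hσ : orderOf σ = p * (p - 1))
    (haff' : ∀ f ∈ H, ∃ a u, f = affinePerm (p ^ 2) a u)
    (hAtrans : ∀ x : ZMod (p ^ 2), affinePerm (p ^ 2) x 1 ∈ H) :
    (∃ j < p, H = Subgroup.zpowers (affinePerm (p ^ 2) 1 (σ ^ (j * (p - 1))))) ∨
      (∃ m, m ∣ p * (p - 1) ∧ 1 < m ∧ ∃ j < p,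
        H = Subgroup.closure {affinePerm (p ^ 2) 1 (σ ^ (j * (p - 1))),
          affinePerm (p ^ 2) 0 (σ ^ (p * (p - 1) / m))}) := by
  haveI := neZero_p hp
  haveI := neZero_psq hp
  haveI : Fact p.Prime := ⟨hp⟩
  let U : Subgroup (ZMod (p ^ 2))ˣ :=
    { carrier := {u | affinePerm (p ^ 2) 0 u ∈ H}
      mul_mem' := fun {u} {v} hu hv => by
        have hm := H.mul_mem hu hv
        rwa [aff_mul, mul_zero, add_zero] at hm
      one_mem' := by
        show affinePerm (p ^ 2) 0 1 ∈ H
        rw [aff_one]; exact H.one_mem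
      inv_mem' := fun {u} hu => by
        have hm := H.inv_mem hu
        rwa [aff_inv, mul_zero, neg_zero] at hm }
  have hUofH : ∀ a u, affinePerm (p ^ 2) a u ∈ H → u ∈ U := by
    intro a u hau
    have hm := H.mul_mem (hAtrans (-a)) hau
    rw [aff_mul, Units.val_one, one_mul, one_mul] at hm
    rwa [show -a + a = (0 : ZMod (p ^ 2)) by ring] at hm
  set m := Nat.card U with hm
  have hm0 : 0 < m := Nat.card_pos
  have hmdvd : m ∣ p * (p - 1) := by
    have hc := Subgroup.card_subgroup_dvd_card U
    rwa [card_units_psq hp] at hc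
  rcases eq_or_lt_of_le (show 1 ≤ m from hm0) with h1 | h1
  · left
    refine ⟨0, hp.pos, ?_⟩
    have hU1 : U = ⊥ := Subgroup.card_eq_one.mp h1.symm
    have hgen : σ ^ (0 * (p - 1)) = 1 := by rw [zero_mul, pow_zero]
    rw [hgen]
    apply le_antisymm
    · intro f hf
      obtain ⟨a, u, rfl⟩ := haff' f hf
      have hu : u = 1 := by
        have hmem := hUofH a u hf
        rw [hU1] at hmem
        exact Subgroup.mem_bot.mp hmem
      subst hu
      refine Subgroup.mem_zpowers_iff.mpr ⟨(a.val : ℤ), ?_⟩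
      rw [zpow_natCast, aff_trans_pow, mul_one, ZMod.natCast_val, ZMod.cast_id]
    · rw [Subgroup.zpowers_le]
      exact hAtrans 1
  · right
    have htop : Subgroup.zpowers σ = ⊤ := by
      apply Subgroup.eq_top_of_card_eq
      rw [Nat.card_zpowers, hσ, card_units_psq hp]
    haveI : IsCyclic (ZMod (p ^ 2))ˣ := ⟨⟨σ, fun x => by
      have hx : x ∈ Subgroup.zpowers σ := htop ▸ Subgroup.mem_top x
      exact Subgroup.mem_zpowers_iff.mp hx⟩⟩
    obtain ⟨g, hg⟩ := IsCyclic.exists_generator (α := U)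
    have hUg : U = Subgroup.zpowers (g : (ZMod (p ^ 2))ˣ) := by
      apply le_antisymm
      · intro x hx
        obtain ⟨k, hk⟩ := Subgroup.mem_zpowers_iff.mp (hg ⟨x, hx⟩)
        refine Subgroup.mem_zpowers_iff.mpr ⟨k, ?_⟩
        have hco := congrArg (Subtype.val) hk
        rwa [SubgroupClass.coe_zpow] at hco
      · rw [Subgroup.zpowers_le]; exact g.2
    have hordg : orderOf (g : (ZMod (p ^ 2))ˣ) = m := by
      rw [← Nat.card_zpowers, ← hUg]
    obtain ⟨t, ht0⟩ : (g : (ZMod (p ^ 2))ˣ) ∈ Submonoid.powers σ := by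
      have hmem : (g : (ZMod (p ^ 2))ˣ) ∈ Subgroup.zpowers σ := htop ▸ Subgroup.mem_top _
      exact ((isOfFinOrder_of_finite σ).mem_powers_iff_mem_zpowers).mpr hmem
    have ht : σ ^ t = (g : (ZMod (p ^ 2))ˣ) := ht0
    have hgcd : p * (p - 1) / Nat.gcd (p * (p - 1)) t = m := by
      have horder : orderOf (σ ^ t) = orderOf σ / Nat.gcd (orderOf σ) t := orderOf_pow σ
      rw [ht, hordg, hσ] at horder
      exact horder.symm
    have hgdvd : Nat.gcd (p * (p - 1)) t ∣ p * (p - 1) := Nat.gcd_dvd_left _ _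
    have hNm : p * (p - 1) / m = Nat.gcd (p * (p - 1)) t := by
      have hq' : p * (p - 1) = Nat.gcd (p * (p - 1)) t * m := by
        rw [← hgcd]
        exact (Nat.mul_div_cancel' hgdvd).symm
      exact Nat.div_eq_of_eq_mul_left hm0 hq'
    have hU2 : U = Subgroup.zpowers (σ ^ (p * (p - 1) / m)) := by
      rw [hUg, ← ht, zpowers_pow_gcd σ (p * (p - 1)) t
        (by rw [← hσ]; exact pow_orderOf_eq_one σ), hNm]
    refine ⟨m, hmdvd, h1, 0, hp.pos, ?_⟩
    have hgen : σ ^ (0 * (p - 1)) = 1 := by rw [zero_mul, pow_zero]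
    rw [hgen]
    apply le_antisymm
    · intro f hf
      obtain ⟨a, u, rfl⟩ := haff' f hf
      have hu : u ∈ Subgroup.zpowers (σ ^ (p * (p - 1) / m)) := hU2 ▸ hUofH a u hf
      obtain ⟨z, hz⟩ := Subgroup.mem_zpowers_iff.mp hu
      have hsplit : affinePerm (p ^ 2) a u
          = affinePerm (p ^ 2) a 1 * affinePerm (p ^ 2) 0 u := by
        rw [aff_mul, aff_eq_iff]
        exact ⟨by rw [Units.val_one]; ring, (one_mul u).symm⟩
      rw [hsplit]
      apply Subgroup.mul_mem
      · have h11 : affinePerm (p ^ 2) 1 1 ∈ Subgroup.closure {affinePerm (p ^ 2) 1 1,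
            affinePerm (p ^ 2) 0 (σ ^ (p * (p - 1) / m))} :=
          Subgroup.subset_closure (Set.mem_insert _ _)
        have he : affinePerm (p ^ 2) a 1 = (affinePerm (p ^ 2) 1 1) ^ (a.val) := by
          rw [aff_trans_pow, mul_one, ZMod.natCast_val, ZMod.cast_id]
        rw [he]
        exact Subgroup.pow_mem _ h11 _
      · have h22 : affinePerm (p ^ 2) 0 (σ ^ (p * (p - 1) / m))
            ∈ Subgroup.closure {affinePerm (p ^ 2) 1 1,
              affinePerm (p ^ 2) 0 (σ ^ (p * (p - 1) / m))} :=
          Subgroup.subset_closure (Set.mem_insert_of_mem _ rfl)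
        have he : affinePerm (p ^ 2) 0 u = (affinePerm (p ^ 2) 0 (σ ^ (p * (p - 1) / m))) ^ z := by
          rw [aff_unit_zpow, hz]
        rw [he]
        exact Subgroup.zpow_mem _ h22 _
    · rw [Subgroup.closure_le]
      rintro f hf
      simp only [Set.mem_insert_iff, Set.mem_singleton_iff] at hf
      rcases hf with rfl | rfl
      · exact hAtrans 1
      · have hmem : σ ^ (p * (p - 1) / m) ∈ U := hU2 ▸ Subgroup.mem_zpowers _
        exact hmem

end CaseA

end Stmt9

theorem stmt_9 (p : ℕ) (hp : p.Prime) (hodd : Odd p)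
    (σ : (ZMod (p ^ 2))ˣ) (hσ : orderOf σ = p * (p - 1))
    (H : Subgroup (Equiv.Perm (ZMod (p ^ 2))))
    (haff : ∀ f ∈ H, ∃ (a : ZMod (p ^ 2)) (u : (ZMod (p ^ 2))ˣ),
      ∀ x, f x = a + (u : ZMod (p ^ 2)) * x) :
    (∀ x y : ZMod (p ^ 2), ∃ f ∈ H, f x = y) ↔
      ((∃ j < p, H = Subgroup.zpowers (affinePerm (p ^ 2) 1 (σ ^ (j * (p - 1))))) ∨
        (∃ m, m ∣ p * (p - 1) ∧ 1 < m ∧ ∃ j < p,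
          H = Subgroup.closure {affinePerm (p ^ 2) 1 (σ ^ (j * (p - 1))),
            affinePerm (p ^ 2) 0 (σ ^ (p * (p - 1) / m))})) := by
  haveI : Fact p.Prime := ⟨hp⟩
  haveI := Stmt9.neZero_p hp
  haveI := Stmt9.neZero_psq hp
  have haff' : ∀ f ∈ H, ∃ a u, f = affinePerm (p ^ 2) a u := by
    intro f hf
    obtain ⟨a, u, hx⟩ := haff f hf
    exact ⟨a, u, Equiv.ext fun x => hx x⟩
  have hungen : ∀ j : ℕ, ∃ c, (((σ ^ (j * (p - 1)) : (ZMod (p ^ 2))ˣ)) : ZMod (p ^ 2)) = 1 + (p : ZMod (p ^ 2)) * c := by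
    intro j
    apply Stmt9.unit_mod_p hp
    rw [← pow_mul, show j * (p - 1) * p = orderOf σ * j by rw [hσ]; ring, pow_mul,
      pow_orderOf_eq_one, one_pow]
  constructor
  · intro htrans
    by_cases hA : ∃ a, IsUnit a ∧ affinePerm (p ^ 2) a 1 ∈ H
    · obtain ⟨a, ha, haH⟩ := hA
      have hAtrans : ∀ x : ZMod (p ^ 2), affinePerm (p ^ 2) x 1 ∈ H := by
        intro x
        set A := ha.unit with hA'
        have hx : affinePerm (p ^ 2) x 1 = (affinePerm (p ^ 2) a 1) ^ ((x * (↑A⁻¹ : ZMod (p ^ 2))).val) := by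
          rw [Stmt9.aff_trans_pow, ZMod.natCast_val, ZMod.cast_id]
          congr 1
          have hs : (↑A : ZMod (p ^ 2)) = a := ha.unit_spec
          rw [← hs, mul_assoc, Units.inv_mul, mul_one]
        rw [hx]
        exact H.pow_mem haH _
      exact Stmt9.caseA hp hσ haff' hAtrans
    · push_neg at hA
      have hnu : ∀ a, affinePerm (p ^ 2) a 1 ∈ H → Stmt9.rmod p a = 0 := by
        intro a haH
        have hna : ¬ IsUnit a := fun h => (hA a h) haH
        obtain ⟨z, hz⟩ := (Stmt9.not_isUnit_iff hp a).mp hna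
        rw [hz, map_mul, Stmt9.rmod_p hp, zero_mul]
      exact Or.inl (Stmt9.caseB hp hodd hσ haff' htrans hnu)
  · rintro (⟨j, hj, rfl⟩ | ⟨m, hm, hm1, j, hj, rfl⟩)
    · obtain ⟨c, hc⟩ := hungen j
      exact Stmt9.trans_of_gen hp hodd hc (Subgroup.mem_zpowers _)
    · obtain ⟨c, hc⟩ := hungen j
      exact Stmt9.trans_of_gen hp hodd hc (Subgroup.subset_closure (Set.mem_insert _ _))
end

section
/- Let p be an odd prime, D_{2p} = ⟨ρ, σ⟩ the dihedral group of order 2p, and φ ∈ Aut(D_{2p}) the automorphism with φ(ρ) = ρ, φ(σ) = σρ. In Hol(D_{2p}) = D_{2p} ⋊ Aut(D_{2p}), the element σφ^j (the pair (σ, φ^j)) has order 2p for every j with 1 ≤ j ≤ p−1, while σ itself (the pair (σ, id)) has order 2. -/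
open DihedralGroup SemidirectProduct

/-- The holomorph of a group `G`, as the semidirect product `G ⋊ Aut(G)`. -/
abbrev Hol (G : Type*) [Group G] := G ⋊[MonoidHom.id (MulAut G)] MulAut G

section aux
variable {p : ℕ} [NeZero p] (φ : MulAut (DihedralGroup p))
  (hφρ : φ (DihedralGroup.r 1) = DihedralGroup.r 1)
  (hφσ : φ (DihedralGroup.sr 0) = DihedralGroup.sr 0 * DihedralGroup.r 1)

include hφρ in
lemma phi_r (i : ZMod p) : φ (r i) = r i := by
  have : (r i : DihedralGroup p) = (r 1) ^ i.val := by
    rw [r_one_pow, ZMod.natCast_val, ZMod.cast_id]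
  rw [this, map_pow, hφρ]

include hφρ hφσ in
lemma phi_sr (i : ZMod p) : φ (sr i) = sr (i + 1) := by
  have : (sr i : DihedralGroup p) = sr 0 * r i := by rw [sr_mul_r, zero_add]
  rw [this, map_mul, hφσ, phi_r φ hφρ, mul_assoc, r_mul_r, sr_mul_r, zero_add, add_comm]

include hφρ in
lemma phipow_r (n : ℕ) (i : ZMod p) : (φ ^ n) (r i) = r i := by
  induction n with
  | zero => rfl
  | succ k ih => rw [pow_succ, MulAut.mul_apply, phi_r φ hφρ, ih]

include hφρ hφσ in
lemma phipow_sr (n : ℕ) (i : ZMod p) : (φ ^ n) (sr i) = sr (i + (n : ZMod p)) := by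
  induction n with
  | zero => simp
  | succ k ih =>
    rw [pow_succ', MulAut.mul_apply, ih, phi_sr φ hφρ hφσ]
    push_cast; ring_nf

include hφρ hφσ in
lemma phi_pow_p : φ ^ p = 1 := by
  ext x
  cases x with
  | r i => rw [phipow_r φ hφρ]; rfl
  | sr i => rw [phipow_sr φ hφρ hφσ, ZMod.natCast_self, add_zero]; rfl

end aux

theorem stmt_14 (p : ℕ) (hp : p.Prime) (hodd : Odd p)
    (φ : MulAut (DihedralGroup p))
    (hφρ : φ (DihedralGroup.r 1) = DihedralGroup.r 1)
    (hφσ : φ (DihedralGroup.sr 0) = DihedralGroup.sr 0 * DihedralGroup.r 1) :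
    (∀ j : ℕ, 1 ≤ j → j ≤ p - 1 →
      orderOf ((SemidirectProduct.inl (DihedralGroup.sr 0) *
        SemidirectProduct.inr (φ ^ j)) : Hol (DihedralGroup p)) = 2 * p) ∧
    orderOf ((SemidirectProduct.inl (DihedralGroup.sr 0)) : Hol (DihedralGroup p)) = 2 := by
  haveI : NeZero p := ⟨hp.ne_zero⟩
  have hppos := hp.pos
  constructor
  · intro j hj1 hj2
    set x : Hol (DihedralGroup p) := inl (sr 0) * inr (φ ^ j) with hx
    have hxmk : x = ⟨sr 0, φ ^ j⟩ := by rw [hx, mk_eq_inl_mul_inr]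
    have hpow2 : ∀ n : ℕ, x ^ (2 * n) = ⟨r ((n * j : ℕ) : ZMod p), φ ^ (2 * n * j)⟩ := by
      intro n
      induction n with
      | zero => simp [-r_zero, SemidirectProduct.ext_iff, one_def]
      | succ k ih =>
        have h2 : 2 * (k + 1) = 2 * k + 2 := by ring
        rw [h2, pow_add, ih, pow_two, hxmk]
        rw [mul_def, mul_def]
        simp only [MonoidHom.id_apply]
        rw [phipow_sr φ hφρ hφσ, sr_mul_sr, phipow_r φ hφρ, r_mul_r]
        congr 1
        · push_cast; ring_nf
        · rw [← pow_add, ← pow_add]; congr 1; ring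
    have hjz : ((j : ZMod p)) ≠ 0 := by
      rw [Ne, ZMod.natCast_eq_zero_iff]
      intro h
      have := Nat.le_of_dvd (by omega) h
      omega
    have hx2p : x ^ (2 * p) = 1 := by
      rw [hpow2 p, SemidirectProduct.ext_iff]
      constructor
      · simp [-r_zero, one_def]
      · show φ ^ (2 * p * j) = 1
        have : 2 * p * j = p * (2 * j) := by ring
        rw [this, pow_mul, phi_pow_p φ hφρ hφσ, one_pow]
    -- x^2 ≠ 1
    have hx2 : x ^ 2 ≠ 1 := by
      have := hpow2 1
      rw [mul_one] at this
      rw [this]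
      intro h
      have hleft := congrArg SemidirectProduct.left h
      simp [-r_zero, one_def] at hleft
      exact hjz (by simpa using hleft)
    -- x^p ≠ 1
    obtain ⟨k, hk⟩ := hodd
    have hxp : x ^ p ≠ 1 := by
      have hxpk : x ^ p = x ^ (2 * k + 1) := congrArg (x ^ ·) hk
      rw [hxpk, pow_succ, hpow2 k, hxmk, mul_def]
      simp only [MonoidHom.id_apply]
      intro h
      have hleft := congrArg SemidirectProduct.left h
      rw [phipow_sr φ hφρ hφσ] at hleft
      simp [-r_zero, r_mul_sr, one_def] at hleft
    apply orderOf_eq_of_pow_and_pow_div_prime (by positivity) hx2p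
    intro q hq hqd
    rcases (Nat.Prime.dvd_mul hq).mp hqd with h | h
    · have hq2 : q = 2 := ((Nat.prime_dvd_prime_iff_eq hq Nat.prime_two).mp h)
      subst hq2
      have : 2 * p / 2 = p := by omega
      rw [this]; exact hxp
    · have hqp : q = p := ((Nat.prime_dvd_prime_iff_eq hq hp).mp h)
      subst hqp
      rw [Nat.mul_div_cancel 2 hq.pos]; exact hx2
  · apply orderOf_eq_prime
    · rw [← map_pow, pow_two, sr_mul_self, map_one]
    · intro h
      rw [show (1 : Hol (DihedralGroup p)) = inl 1 from (map_one _).symm, inl_inj, one_def] at h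
      exact absurd h (by simp [-r_zero])
end

section
/- Let p be an odd prime, and let G be a finite group such that G embeds as a transitive subgroup of Hol(ℤ/p²ℤ) acting on ℤ/p²ℤ. Then G does not embed as a transitive subgroup of Hol(C_p × C_p) acting on C_p × C_p. -/
lemma aux_nilp_sq {K : Type*} [Field K] (B : Matrix (Fin 2) (Fin 2) K) (m : ℕ) (hm : m ≠ 0)
    (hB : B ^ m = 0) : B * B = 0 := by
  haveI hne : Nonempty (Fin 2) := ⟨0⟩
  have hdet : B.det = 0 := by
    have : B.det ^ m = 0 := by rw [← Matrix.det_pow, hB, Matrix.det_zero]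
    exact pow_eq_zero_iff hm |>.mp this
  have hCH : B * B - (B 0 0 + B 1 1) • B + (B 0 0 * B 1 1 - B 0 1 * B 1 0) • (1 : Matrix (Fin 2) (Fin 2) K) = 0 := by
    ext i j
    fin_cases i <;> fin_cases j <;>
      simp [Matrix.mul_apply, Fin.sum_univ_two, Matrix.one_apply] <;> ring
  rw [Matrix.det_fin_two] at hdet
  rw [hdet, zero_smul, add_zero, sub_eq_zero] at hCH
  set t := B 0 0 + B 1 1 with ht
  have hpow : ∀ k : ℕ, B ^ (k + 1) = t ^ k • B := by
    intro k
    induction k with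
    | zero => simp
    | succ k ih =>
      rw [pow_succ, ih, Matrix.smul_mul, hCH, smul_smul, ← pow_succ]
  rcases Nat.exists_eq_succ_of_ne_zero hm with ⟨k, rfl⟩
  rw [hpow k] at hB
  rcases eq_or_ne t 0 with h0 | h0
  · rw [hCH, h0, zero_smul]
  · have hB0 : B = 0 := by
      have := congrArg (fun M => (t ^ k)⁻¹ • M) hB
      simpa [smul_smul, inv_mul_cancel₀ (pow_ne_zero k h0)] using this
    rw [hB0, Matrix.mul_zero]

lemma key2 (p : ℕ) (hp : p.Prime) (hodd : Odd p)
    (σ : Equiv.Perm (ZMod p × ZMod p)) (a : ZMod p × ZMod p)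
    (A : (ZMod p × ZMod p) ≃+ (ZMod p × ZMod p))
    (hσ : ∀ x, σ x = a + A x) (h2 : σ ^ p ^ 2 = 1) : σ ^ p = 1 := by
  haveI : Fact p.Prime := ⟨hp⟩
  set g : Matrix (Fin 2) (Fin 2) (ZMod p) → (ZMod p × ZMod p) → (ZMod p × ZMod p) :=
    fun P v => (P 0 0 * v.1 + P 0 1 * v.2, P 1 0 * v.1 + P 1 1 * v.2) with hg
  set M : Matrix (Fin 2) (Fin 2) (ZMod p) :=
    !![(A (1,0)).1, (A (0,1)).1; (A (1,0)).2, (A (0,1)).2] with hM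
  have key : ∀ v, A v = g M v := by
    intro v
    have hv : v = (v.1, (0:ZMod p)) + ((0:ZMod p), v.2) := by
      ext <;> simp
    have h10 : (v.1, (0:ZMod p)) = v.1.val • ((1:ZMod p), (0:ZMod p)) := by
      ext <;> simp [Prod.smul_fst, Prod.smul_snd, nsmul_eq_mul,
        ZMod.natCast_rightInverse v.1]
    have h01 : ((0:ZMod p), v.2) = v.2.val • ((0:ZMod p), (1:ZMod p)) := by
      ext <;> simp [Prod.smul_fst, Prod.smul_snd, nsmul_eq_mul,
        ZMod.natCast_rightInverse v.2]
    rw [hv, map_add, h10, h01, map_nsmul, map_nsmul]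
    apply Prod.ext <;>
      simp [hg, hM, Prod.smul_fst, Prod.smul_snd, nsmul_eq_mul,
        ZMod.natCast_rightInverse v.1, ZMod.natCast_rightInverse v.2] <;> ring
  have gcomp : ∀ P Q v, g P (g Q v) = g (P * Q) v := by
    intro P Q v
    apply Prod.ext <;> simp [hg, Matrix.mul_apply, Fin.sum_univ_two] <;> ring
  have iter : ∀ (k : ℕ) v, (⇑A)^[k] v = g (M ^ k) v := by
    intro k
    induction k with
    | zero => intro v; simp [hg, Matrix.one_apply]
    | succ k ih =>
      intro v
      rw [Function.iterate_succ_apply', ih, key, gcomp, ← pow_succ']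
  have hiter0 : ∀ k : ℕ, (⇑A)^[k] 0 = 0 := fun k => Function.iterate_fixed (map_zero A) k
  have spow : ∀ (k : ℕ) x, (σ ^ k) x = (σ ^ k) 0 + (⇑A)^[k] x := by
    intro k
    induction k with
    | zero => intro x; simp
    | succ k ih =>
      intro x
      rw [pow_succ' σ k]
      simp only [Equiv.Perm.mul_apply]
      rw [hσ, hσ, ih x, ih 0, hiter0, add_zero, map_add, Function.iterate_succ_apply']
      abel
  have hA2 : ∀ x, (⇑A)^[p ^ 2] x = x := by
    have hfix : ∀ x, (σ ^ p ^ 2) x = x := by intro x; rw [h2]; rfl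
    have h0 : (σ ^ p ^ 2) 0 = 0 := hfix 0
    intro x
    have := (spow (p ^ 2) x).symm.trans (hfix x)
    rwa [h0, zero_add] at this
  have hM2 : M ^ p ^ 2 = 1 := by
    have e10 := (iter (p ^ 2) (1, 0)).symm.trans (hA2 (1, 0))
    have e01 := (iter (p ^ 2) (0, 1)).symm.trans (hA2 (0, 1))
    rw [Prod.ext_iff] at e10 e01
    simp only [hg, mul_one, mul_zero, add_zero, zero_add] at e10 e01
    ext i j
    fin_cases i <;> fin_cases j <;>
      simp [Matrix.one_apply, e10.1, e10.2, e01.1, e01.2]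
  have hBpow : (M - 1) ^ p ^ 2 = 0 := by
    rw [sub_pow_char_pow_of_commute p 2 (Commute.one_right M), hM2, one_pow, sub_self]
  have hBB : (M - 1) * (M - 1) = 0 :=
    aux_nilp_sq (M - 1) (p ^ 2) (pow_ne_zero 2 hp.ne_zero) hBpow
  set N : (ZMod p × ZMod p) → (ZMod p × ZMod p) := fun v => A v - v with hN
  have hNg : ∀ v, N v = g (M - 1) v := by
    intro v
    rw [hN]
    simp only []
    rw [key v]
    apply Prod.ext <;>
      simp [hg, Matrix.sub_apply, Matrix.one_apply, Prod.fst_sub, Prod.snd_sub] <;> ring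
  have hNN : ∀ v, N (N v) = 0 := by
    intro v
    rw [hNg, hNg, gcomp, hBB]
    simp [hg]
  have hAv : ∀ v, A v = v + N v := by intro v; simp [hN]
  have hAN : ∀ v, A (N v) = N v := by
    intro v
    rw [hAv (N v), hNN v, add_zero]
  have hiterN : ∀ (k : ℕ) v, (⇑A)^[k] v = v + k • N v := by
    intro k
    induction k with
    | zero => intro v; simp
    | succ k ih =>
      intro v
      have hNadd : ∀ x y, N (x + y) = N x + N y := by
        intro x y; simp only [hN, map_add]; abel
      have hNsmul : ∀ (m : ℕ) w, N (m • w) = m • N w := by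
        intro m w; simp only [hN, map_nsmul, smul_sub]
      rw [Function.iterate_succ_apply', ih, hAv, hNadd, hNsmul, hNN, smul_zero,
        add_zero, succ_nsmul]
      abel
  have hpsmul : ∀ v : ZMod p × ZMod p, p • v = 0 := by
    intro v
    apply Prod.ext <;>
      simp [Prod.smul_fst, Prod.smul_snd, nsmul_eq_mul, ZMod.natCast_self]
  have hc : ∀ k : ℕ, (σ ^ k) 0 = k • a + (∑ i ∈ Finset.range k, i) • N a := by
    intro k
    induction k with
    | zero => simp
    | succ k ih =>
      have h1 : (σ ^ (k + 1)) 0 = (σ ^ k) (σ 0) := by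
        rw [pow_succ]; rfl
      rw [h1, hσ 0, map_zero, add_zero, spow k a, ih, hiterN k a, Finset.sum_range_succ,
        succ_nsmul, add_nsmul]
      abel
  obtain ⟨m, hm⟩ := hodd
  have hsum : (∑ i ∈ Finset.range p, i) = p * m := by
    have hg2 := Finset.sum_range_id_mul_two p
    have hp1 : p - 1 = 2 * m := by omega
    rw [hp1, show p * (2 * m) = (p * m) * 2 by ring] at hg2
    exact Nat.eq_of_mul_eq_mul_right (by norm_num) hg2
  have hTa : (∑ i ∈ Finset.range p, i) • N a = 0 := by
    rw [hsum, mul_comm, mul_smul, hpsmul, smul_zero]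
  apply Equiv.ext
  intro x
  rw [spow p x, hc p, hiterN p x, hTa, hpsmul, hpsmul]
  simp

lemma key1 (p : ℕ) (hp : p.Prime) (hodd : Odd p) (G : Type*) [Group G] [Finite G]
    (f : G →* Equiv.Perm (ZMod (p ^ 2))) (finj : Function.Injective f)
    (haff : ∀ g : G, ∃ (a : ZMod (p ^ 2)) (u : (ZMod (p ^ 2))ˣ),
      ∀ x, f g x = a + (u : ZMod (p ^ 2)) * x)
    (htrans : ∀ x y : ZMod (p ^ 2), ∃ g : G, f g x = y) :
    ∃ n : G, orderOf n = p ^ 2 := by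
  haveI : Fact p.Prime := ⟨hp⟩
  haveI : NeZero (p ^ 2) := ⟨pow_ne_zero 2 hp.ne_zero⟩
  have hdvd : p ∣ p ^ 2 := dvd_pow_self p two_ne_zero
  have haff' : ∀ g : G, (∀ x, f g x = f g 0 + (f g 1 - f g 0) * x) ∧
      IsUnit (f g 1 - f g 0) := by
    intro g
    obtain ⟨a, u, hu⟩ := haff g
    have h0 : f g 0 = a := by rw [hu 0]; ring
    have h1 : f g 1 - f g 0 = u := by rw [hu 1, h0]; ring
    exact ⟨fun x => by rw [h1, h0, hu x], h1 ▸ u.isUnit⟩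
  have hcomp : ∀ (g g' : G) (x : ZMod (p ^ 2)), f (g * g') x = f g (f g' x) := by
    intro g g' x; rw [map_mul]; rfl
  let ψ : G →* ZMod p :=
    { toFun := fun g => ZMod.castHom hdvd (ZMod p) (f g 1 - f g 0)
      map_one' := by
        simp only [map_one, Equiv.Perm.coe_one, id_eq, sub_zero, map_one]
      map_mul' := by
        intro g g'
        simp only [← map_mul]
        congr 1
        rw [hcomp g g' 1, hcomp g g' 0, (haff' g).1 (f g' 1), (haff' g).1 (f g' 0)]
        ring }
  let φ := ψ.toHomUnits
  letI act : MulAction G (ZMod (p ^ 2)) := MulAction.compHom _ f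
  haveI : MulAction.IsPretransitive G (ZMod (p ^ 2)) :=
    ⟨fun x y => htrans x y⟩
  set St := MulAction.stabilizer G (0 : ZMod (p ^ 2)) with hSt
  have hStindex : St.index = p ^ 2 := by
    rw [MulAction.index_stabilizer_of_transitive]
    rw [Nat.card_eq_fintype_card, ZMod.card]
  set N := φ.ker with hNdef
  have hNindex : N.index ∣ p - 1 := by
    rw [hNdef, Subgroup.index_ker]
    have h1 : Nat.card φ.range ∣ Nat.card (ZMod p)ˣ := Subgroup.card_subgroup_dvd_card _
    have h2 : Nat.card (ZMod p)ˣ = p - 1 := by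
      rw [Nat.card_eq_fintype_card, ZMod.card_units_eq_totient, Nat.totient_prime hp]
    rwa [h2] at h1
  have hcop : Nat.Coprime (p - 1) (p ^ 2) := by
    have h : Nat.Coprime p (p - 1) := hp.coprime_iff_not_dvd.mpr (fun hd => by
      have h2 := hp.two_le
      have := Nat.le_of_dvd (by omega) hd
      omega)
    exact (h.pow_left 2).symm
  have htop : N ⊔ St = ⊤ := by
    rw [← Subgroup.index_eq_one]
    have d1 : (N ⊔ St).index ∣ p - 1 :=
      dvd_trans (Subgroup.index_dvd_of_le le_sup_left) hNindex
    have d2 : (N ⊔ St).index ∣ p ^ 2 := hStindex ▸ Subgroup.index_dvd_of_le le_sup_right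
    have hdd := Nat.dvd_gcd d1 d2
    rw [Nat.Coprime] at hcop
    rw [hcop] at hdd
    exact Nat.dvd_one.mp hdd
  obtain ⟨g0, hg0⟩ := htrans 0 1
  have hgmem : g0 ∈ (↑(N ⊔ St) : Set G) := htop ▸ Subgroup.mem_top g0
  rw [Subgroup.normal_mul] at hgmem
  obtain ⟨n, hn, s, hs, rfl⟩ := hgmem
  have hs0 : f s 0 = 0 := hs
  have hfn0 : f n 0 = 1 := by
    rw [hcomp n s 0, hs0] at hg0
    exact hg0
  obtain ⟨hfn, hun⟩ := haff' n
  obtain ⟨u, hu⟩ : ∃ u, f n 1 - f n 0 = u := ⟨_, rfl⟩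
  rw [hu] at hfn hun
  have hker : ZMod.castHom hdvd (ZMod p) u = 1 := by
    have hn' : φ n = 1 := hn
    have h2 := congrArg (Units.val) hn'
    rw [MonoidHom.coe_toHomUnits] at h2
    rw [← hu]
    exact h2
  have hc : ∃ c : ZMod (p ^ 2), u = 1 + (p : ZMod (p ^ 2)) * c := by
    have h0 : ZMod.castHom hdvd (ZMod p) (u - 1) = 0 := by
      rw [map_sub, map_one, hker, sub_self]
    have hval : (((u - 1).val : ℕ) : ZMod p) = 0 := by
      rwa [ZMod.natCast_val, ← ZMod.castHom_apply (h := hdvd)]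
    have hdv : p ∣ (u - 1).val := (ZMod.natCast_eq_zero_iff _ _).mp hval
    obtain ⟨t, ht⟩ := hdv
    refine ⟨(t : ZMod (p ^ 2)), ?_⟩
    have h2 : (((u - 1).val : ℕ) : ZMod (p ^ 2)) = u - 1 := ZMod.natCast_rightInverse _
    rw [ht] at h2
    push_cast at h2
    linear_combination -h2
  obtain ⟨c, hc⟩ := hc
  have hpp : (p : ZMod (p ^ 2)) * p = 0 := by
    have h0 : ((p ^ 2 : ℕ) : ZMod (p ^ 2)) = 0 := ZMod.natCast_self _
    push_cast at h0
    linear_combination h0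
  have hup : ∀ k : ℕ, u ^ k = 1 + (k : ZMod (p ^ 2)) * ((p : ZMod (p ^ 2)) * c) := by
    intro k
    induction k with
    | zero => simp
    | succ k ih =>
      rw [pow_succ u k]
      push_cast
      linear_combination u * ih + (1 + (k : ZMod (p ^ 2)) * ((p : ZMod (p ^ 2)) * c)) * hc
        + ((k : ZMod (p ^ 2)) * c * c) * hpp
  have hfk : ∀ (k : ℕ) (x : ZMod (p ^ 2)), f (n ^ k) x
      = (k : ZMod (p ^ 2)) + (∑ i ∈ Finset.range k, (i : ZMod (p ^ 2))) * ((p : ZMod (p ^ 2)) * c)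
        + u ^ k * x := by
    intro k
    induction k with
    | zero => intro x; simp
    | succ k ih =>
      intro x
      have hsplit : f (n ^ (k + 1)) x = f (n ^ k) (f n x) := by rw [pow_succ n k, hcomp]
      rw [hsplit, ih (f n x), hfn x, hfn0, Finset.sum_range_succ]
      push_cast
      linear_combination hup k
  have hzero : ∀ T : ℕ, p ∣ T → (T : ZMod (p ^ 2)) * ((p : ZMod (p ^ 2)) * c) = 0 := by
    intro T hT
    obtain ⟨t, rfl⟩ := hT
    push_cast
    linear_combination ((t : ZMod (p ^ 2)) * c) * hpp
  have hcast_sum : ∀ m : ℕ, (∑ i ∈ Finset.range m, (i : ZMod (p ^ 2)))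
      = ((∑ i ∈ Finset.range m, i : ℕ) : ZMod (p ^ 2)) := fun m => (Nat.cast_sum _ _).symm
  have hgauss : ∀ m : ℕ, Odd m → m ∣ ∑ i ∈ Finset.range m, i := by
    intro m hm
    obtain ⟨t, ht⟩ := hm
    refine ⟨t, ?_⟩
    have hg := Finset.sum_range_id_mul_two m
    have h1 : m - 1 = 2 * t := by omega
    rw [h1, show m * (2 * t) = m * t * 2 by ring] at hg
    exact Nat.eq_of_mul_eq_mul_right (by norm_num) hg
  have hSp : (∑ i ∈ Finset.range p, (i : ZMod (p ^ 2))) * ((p : ZMod (p ^ 2)) * c) = 0 := by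
    rw [hcast_sum]
    exact hzero _ (hgauss p hodd)
  have hSp2 : (∑ i ∈ Finset.range (p ^ 2), (i : ZMod (p ^ 2))) * ((p : ZMod (p ^ 2)) * c) = 0 := by
    rw [hcast_sum]
    exact hzero _ (dvd_trans hdvd (hgauss (p ^ 2) (hodd.pow)))
  have hpne : (p : ZMod (p ^ 2)) ≠ 0 := by
    intro h
    have := (ZMod.natCast_eq_zero_iff p (p ^ 2)).mp h
    have h2 := Nat.le_of_dvd hp.pos this
    have h3 := hp.two_le
    nlinarith [sq_nonneg p]
  have hp2cast : ((p ^ 2 : ℕ) : ZMod (p ^ 2)) = 0 := ZMod.natCast_self _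
  have hnp_ne : n ^ p ≠ 1 := by
    intro h
    have h0 := hfk p 0
    rw [h] at h0
    simp only [map_one, Equiv.Perm.coe_one, id_eq, mul_zero, add_zero] at h0
    rw [hSp] at h0
    exact hpne (by linear_combination -h0)
  have hnp2 : n ^ (p ^ 2) = 1 := by
    apply finj
    rw [map_one]
    apply Equiv.ext
    intro x
    rw [hfk (p ^ 2) x, hup (p ^ 2), hSp2]
    push_cast at hp2cast ⊢
    rw [hp2cast]
    simp [Equiv.Perm.one_apply]
  exact ⟨n, orderOf_eq_prime_pow (by simpa using hnp_ne) (by simpa using hnp2)⟩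

theorem stmt_19 (p : ℕ) (hp : p.Prime) (hodd : Odd p)
    (G : Type*) [Group G] [Finite G]
    (h1 : ∃ f : G →* Equiv.Perm (ZMod (p ^ 2)), Function.Injective f ∧
      (∀ g : G, ∃ (a : ZMod (p ^ 2)) (u : (ZMod (p ^ 2))ˣ),
        ∀ x, f g x = a + (u : ZMod (p ^ 2)) * x) ∧
      (∀ x y : ZMod (p ^ 2), ∃ g : G, f g x = y)) :
    ¬ ∃ f : G →* Equiv.Perm (ZMod p × ZMod p), Function.Injective f ∧
      (∀ g : G, ∃ (a : ZMod p × ZMod p)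
        (A : (ZMod p × ZMod p) ≃+ (ZMod p × ZMod p)),
        ∀ x, f g x = a + A x) ∧
      (∀ x y : ZMod p × ZMod p, ∃ g : G, f g x = y) := by
  obtain ⟨f, finj, haff, htrans⟩ := h1
  obtain ⟨n, hn⟩ := key1 p hp hodd G f finj haff htrans
  rintro ⟨f', inj', aff', -⟩
  have hordσ : orderOf (f' n) = p ^ 2 := by rw [orderOf_injective f' inj' n, hn]
  obtain ⟨a, A, hA⟩ := aff' n
  have h2 : (f' n) ^ p ^ 2 = 1 := by rw [← hordσ]; exact pow_orderOf_eq_one _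
  have hσp : (f' n) ^ p = 1 := key2 p hp hodd (f' n) a A hA h2
  have hdvd : p ^ 2 ∣ p := hordσ ▸ orderOf_dvd_of_pow_eq_one hσp
  have h3 := Nat.le_of_dvd hp.pos hdvd
  nlinarith [hp.two_le]
end
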